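/- Define on G = ℤ × ℝ³ the multiplication (m₁,x₁,x₂,x₃)·(n₁,y₁,y₂,y₃) = (m₁+n₁, x₁+y₁, x₂+y₂+m₁y₁, x₃+y₃+m₁y₂+½m₁²y₁). Then G is a group and is 3-step nilpotent, and its identity component {0}×ℝ³ is abelian. -/

import Mathlib

/-!
`G` is the semidirect product `ℤ ⋉ ℝ³` in which `m` acts by `exp (m N)` for the nilpotent shift
`N (y₁, y₂, y₃) = (0, y₁, y₂)`. Commutators have trivial `ℤ`- and first `ℝ`-coordinate, i.e. they
lie in `{0} × N ℝ³`; commutators with such elements lie in `{0} × N² ℝ³`, which is central. On `{0} × ℝ³` the action is trivial, so the product there is plain addition.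
-/

/-- The multiplication on `G = ℤ × ℝ³`:
`(m₁,x₁,x₂,x₃)·(n₁,y₁,y₂,y₃) = (m₁+n₁, x₁+y₁, x₂+y₂+m₁y₁, x₃+y₃+m₁y₂+½m₁²y₁)`. -/
noncomputable def mul4 : (ℤ × ℝ × ℝ × ℝ) → (ℤ × ℝ × ℝ × ℝ) → (ℤ × ℝ × ℝ × ℝ) :=
  fun g h => (g.1 + h.1, g.2.1 + h.2.1, g.2.2.1 + h.2.2.1 + (g.1 : ℝ) * h.2.1,
    g.2.2.2 + h.2.2.2 + (g.1 : ℝ) * h.2.2.1 + (1 / 2 : ℝ) * (g.1 : ℝ) ^ 2 * h.2.1)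

/-- The commutator `[g,h] = g⁻¹h⁻¹gh` with respect to `mul4` and an inverse map `inv`. -/
noncomputable def comm4 (inv : ℤ × ℝ × ℝ × ℝ → ℤ × ℝ × ℝ × ℝ) (g h : ℤ × ℝ × ℝ × ℝ) : ℤ × ℝ × ℝ × ℝ :=
  mul4 (mul4 (inv g) (inv h)) (mul4 g h)

/-- The value of `inv4 a` is the solution `b` of `mul4 b a = (0, 0, 0, 0)`, read off coordinate by
coordinate. -/
noncomputable def inv4 (a : ℤ × ℝ × ℝ × ℝ) : ℤ × ℝ × ℝ × ℝ :=
  (-a.1, -a.2.1, -a.2.2.1 + (a.1 : ℝ) * a.2.1,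
    -a.2.2.2 + (a.1 : ℝ) * a.2.2.1 - (1 / 2 : ℝ) * (a.1 : ℝ) ^ 2 * a.2.1)

theorem mul4_assoc (a b c : ℤ × ℝ × ℝ × ℝ) : mul4 (mul4 a b) c = mul4 a (mul4 b c) := by
  simp only [mul4, Prod.mk.injEq]
  refine ⟨by ring, by ring, by push_cast; ring, by push_cast; ring⟩

theorem zero_mul4 (a : ℤ × ℝ × ℝ × ℝ) : mul4 (0, 0, 0, 0) a = a := by
  simp [mul4]

theorem mul4_zero (a : ℤ × ℝ × ℝ × ℝ) : mul4 a (0, 0, 0, 0) = a := by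
  simp [mul4]

theorem inv4_mul4 (a : ℤ × ℝ × ℝ × ℝ) : mul4 (inv4 a) a = (0, 0, 0, 0) := by
  simp only [inv4, mul4, Prod.mk.injEq]
  refine ⟨by ring, by ring, by push_cast; ring, by push_cast; ring⟩

theorem mul4_inv4 (a : ℤ × ℝ × ℝ × ℝ) : mul4 a (inv4 a) = (0, 0, 0, 0) := by
  simp only [inv4, mul4, Prod.mk.injEq]
  refine ⟨by ring, by ring, by ring, by ring⟩

theorem mul4_of_fst_eq_zero {g : ℤ × ℝ × ℝ × ℝ} (hg : g.1 = 0) (h : ℤ × ℝ × ℝ × ℝ) :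
    mul4 g h = g + h := by
  ext <;> simp [mul4, hg]

theorem exists_comm4_eq (g h : ℤ × ℝ × ℝ × ℝ) : ∃ u v : ℝ, comm4 inv4 g h = (0, 0, u, v) :=
  ⟨_, _, Prod.ext (by simp only [comm4, mul4, inv4]; ring)
    (Prod.ext (by simp only [comm4, mul4, inv4]; ring) rfl)⟩

theorem comm4_of_fst_snd_eq_zero (g : ℤ × ℝ × ℝ × ℝ) (u v : ℝ) :
    comm4 inv4 g (0, 0, u, v) = (0, 0, 0, (g.1 : ℝ) * u) := by
  simp only [comm4, mul4, inv4, Prod.mk.injEq]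
  refine ⟨by ring, by ring, by push_cast; ring, by push_cast; ring⟩

theorem comm4_of_central (g : ℤ × ℝ × ℝ × ℝ) (w : ℝ) :
    comm4 inv4 g (0, 0, 0, w) = (0, 0, 0, 0) := by
  simpa using comm4_of_fst_snd_eq_zero g 0 w

theorem comm4_comm4_comm4 (a b c d : ℤ × ℝ × ℝ × ℝ) :
    comm4 inv4 a (comm4 inv4 b (comm4 inv4 c d)) = (0, 0, 0, 0) := by
  obtain ⟨u, v, hcd⟩ := exists_comm4_eq c d
  rw [hcd, comm4_of_fst_snd_eq_zero, comm4_of_central]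

/-- `G = ℤ × ℝ³` with the above multiplication is a group, it is 3-step nilpotent
(every 4-fold iterated commutator `[a,[b,[c,d]]]` is trivial), and its identity
component `{0} × ℝ³` is abelian. -/
theorem stmt_4 :
    ∃ inv : ℤ × ℝ × ℝ × ℝ → ℤ × ℝ × ℝ × ℝ,
      (∀ a b c : ℤ × ℝ × ℝ × ℝ, mul4 (mul4 a b) c = mul4 a (mul4 b c)) ∧
      (∀ a : ℤ × ℝ × ℝ × ℝ, mul4 (0, 0, 0, 0) a = a) ∧
      (∀ a : ℤ × ℝ × ℝ × ℝ, mul4 a (0, 0, 0, 0) = a) ∧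
      (∀ a : ℤ × ℝ × ℝ × ℝ, mul4 (inv a) a = (0, 0, 0, 0)) ∧
      (∀ a : ℤ × ℝ × ℝ × ℝ, mul4 a (inv a) = (0, 0, 0, 0)) ∧
      (∀ a b c d : ℤ × ℝ × ℝ × ℝ,
        comm4 inv a (comm4 inv b (comm4 inv c d)) = (0, 0, 0, 0)) ∧
      (∀ g h : ℤ × ℝ × ℝ × ℝ, g.1 = 0 → h.1 = 0 → mul4 g h = mul4 h g) :=
  ⟨inv4, mul4_assoc, zero_mul4, mul4_zero, inv4_mul4, mul4_inv4, comm4_comm4_comm4,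
    fun g h hg hh => by rw [mul4_of_fst_eq_zero hg, mul4_of_fst_eq_zero hh, add_comm]⟩
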